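/- arXiv:2604.02132 — 3 statements merged into one kernel-verified Lean document; each statement's English description precedes it below -/
import Mathlib

section
/- Let constants η > 0, b3 > 0, K1 ≥ 0, K2 ≥ 0, L_α ≥ 0, b2 > 0 and ν ∈ (0,1) be given, and set ε̄ := min{ 4ηνb3/(K1² + 4ηK2), (1-ν)b3/(L_α·b2) } (with the convention that a term is +∞ if its denominator vanishes). Then for every ε ∈ (0, ε̄) and every r ≥ 0 and v ∈ ℝ: η + (b3/ε - K2)·r² - K1·r - L_α·b2·r² ≥ 0. -/
/-!
Split `b3 / ε = ν b3 / ε + (1 - ν) b3 / ε`. The second bound on `ε` says that `(1 - ν) b3 / ε`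
absorbs the Lipschitz correction `Lα b2`; the first says that the quadratic
`(ν b3 / ε - K2) r² - K1 r + η` has nonpositive discriminant, hence is nonnegative since `η > 0`.
-/

/-- `d = 0 ∨ ε < c / d` encodes the paper's `ε < c / d` with the convention `c / 0 = +∞`. -/
lemma mul_le_of_eq_zero_or_lt_div {ε c d : ℝ} (hε : 0 ≤ ε) (hc : 0 ≤ c)
    (h : d = 0 ∨ ε < c / d) : ε * d ≤ c := by
  rcases le_or_gt d 0 with hd | hd
  · exact (mul_nonpos_of_nonneg_of_nonpos hε hd).trans hc
  · rcases h with h | h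
    · exact absurd h hd.ne'
    · exact ((lt_div_iff₀ hd).1 h).le

lemma quadratic_nonneg_of_discrim_nonpos {K : Type*} [Field K] [LinearOrder K]
    [IsStrictOrderedRing K] {a b c : K} (hc : 0 < c) (h : discrim a b c ≤ 0) (x : K) :
    0 ≤ a * (x * x) + b * x + c := by
  have key : 4 * c * (a * (x * x) + b * x + c) = (2 * c + b * x) ^ 2 - discrim a b c * x ^ 2 := by
    rw [discrim]; ring
  have hpos : 0 ≤ 4 * c * (a * (x * x) + b * x + c) := by
    rw [key]
    exact sub_nonneg.2 ((mul_nonpos_of_nonpos_of_nonneg h (sq_nonneg x)).trans (sq_nonneg _))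
  exact nonneg_of_mul_nonneg_right hpos (by positivity)

theorem core_quantitative_estimate_general (η b3 K1 K2 Lα b2 ν ε : ℝ)
    (hη : η > 0) (hb3 : b3 > 0)
    (hν : 0 < ν) (hν1 : ν < 1)
    (hε0 : 0 < ε)
    (hε1 : K1 ^ 2 + 4 * η * K2 = 0 ∨ ε < 4 * η * ν * b3 / (K1 ^ 2 + 4 * η * K2))
    (hε2 : Lα * b2 = 0 ∨ ε < (1 - ν) * b3 / (Lα * b2)) :
    ∀ r : ℝ, r ≥ 0 → ∀ _v : ℝ,
      η + (b3 / ε - K2) * r ^ 2 - K1 * r - Lα * b2 * r ^ 2 ≥ 0 := by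
  intro r _ _
  have hcoupling : K1 ^ 2 + 4 * η * K2 ≤ 4 * η * ν * b3 / ε := by
    rw [le_div_iff₀ hε0, mul_comm]
    exact mul_le_of_eq_zero_or_lt_div hε0.le (by positivity) hε1
  have hlipschitz : Lα * b2 ≤ (1 - ν) * b3 / ε := by
    rw [le_div_iff₀ hε0, mul_comm]
    exact mul_le_of_eq_zero_or_lt_div hε0.le (by nlinarith) hε2
  have hquad : 0 ≤ (ν * b3 / ε - K2) * (r * r) + (-K1) * r + η :=
    quadratic_nonneg_of_discrim_nonpos hη (by rw [discrim]; linear_combination hcoupling) r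
  have hrest : 0 ≤ ((1 - ν) * b3 / ε - Lα * b2) * r ^ 2 :=
    mul_nonneg (sub_nonneg.2 hlipschitz) (sq_nonneg r)
  linear_combination hquad + hrest

theorem core_quantitative_estimate (η b3 K1 K2 Lα b2 ν ε : ℝ)
    (hη : η > 0) (hb3 : b3 > 0) (hK1 : K1 ≥ 0) (hK2 : K2 ≥ 0)
    (hLα : Lα ≥ 0) (hb2 : b2 > 0) (hν : 0 < ν) (hν1 : ν < 1)
    (hε0 : 0 < ε)
    (hε1 : K1 ^ 2 + 4 * η * K2 = 0 ∨ ε < 4 * η * ν * b3 / (K1 ^ 2 + 4 * η * K2))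
    (hε2 : Lα * b2 = 0 ∨ ε < (1 - ν) * b3 / (Lα * b2)) :
    ∀ r : ℝ, r ≥ 0 → ∀ _v : ℝ,
      η + (b3 / ε - K2) * r ^ 2 - K1 * r - Lα * b2 * r ^ 2 ≥ 0 :=
  core_quantitative_estimate_general η b3 K1 K2 Lα b2 ν ε hη hb3 hν hν1 hε0 hε1 hε2
end

section
/- Let h : ℝ^n → ℝ be continuously differentiable, α : ℝ → ℝ locally Lipschitz with α(0) = 0 and α nondecreasing, and let x : [0, T] → ℝ^n be a C¹ trajectory satisfying d/dt h(x(t)) ≥ -α(h(x(t))) for all t ∈ [0, T]. If h(x(0)) ≥ 0, then h(x(t)) ≥ 0 for all t ∈ [0, T]. -/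
/-! Wherever `h (x t)` is negative, `α (h (x t)) ≤ α 0 = 0`, so the barrier value is nondecreasing
there. Past the last time it was nonnegative it could therefore never have become negative. -/

open Set

theorem exists_last_nonneg_of_neg {g : ℝ → ℝ} {a t : ℝ} (hat : a ≤ t)
    (hg : ContinuousOn g (Icc a t)) (ha : 0 ≤ g a) (ht : g t < 0) :
    ∃ s ∈ Ico a t, 0 ≤ g s ∧ ∀ u ∈ Ioc s t, g u < 0 := by
  let S := {s ∈ Icc a t | 0 ≤ g s}
  have hS_closed : IsClosed S := hg.preimage_isClosed_of_isClosed isClosed_Icc isClosed_Ici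
  have hS_bdd : BddAbove S := bddAbove_Icc.mono inter_subset_left
  obtain ⟨⟨has, hst⟩, hgs⟩ : sSup S ∈ S := hS_closed.csSup_mem ⟨a, ⟨le_rfl, hat⟩, ha⟩ hS_bdd
  refine ⟨sSup S, ⟨has, hst.lt_of_ne fun hs => ht.not_ge (hs ▸ hgs)⟩, hgs, fun u ⟨hsu, hut⟩ => ?_⟩
  by_contra! hgu
  exact hsu.not_ge (le_csSup hS_bdd ⟨⟨has.trans hsu.le, hut⟩, hgu⟩)

theorem nonneg_of_deriv_nonneg_of_neg {g : ℝ → ℝ} {a b : ℝ} (hg : ContinuousOn g (Icc a b))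
    (hgd : DifferentiableOn ℝ g (Ioo a b)) (hderiv : ∀ u ∈ Ioo a b, g u < 0 → 0 ≤ deriv g u)
    (ha : 0 ≤ g a) : ∀ t ∈ Icc a b, 0 ≤ g t := by
  rintro t ⟨hat, htb⟩
  by_contra! ht
  obtain ⟨s, ⟨has, hst⟩, hgs, hneg⟩ :=
    exists_last_nonneg_of_neg hat (hg.mono (Icc_subset_Icc_right htb)) ha ht
  have hsub : Icc s t ⊆ Icc a b := Icc_subset_Icc has htb
  have hmono : MonotoneOn g (Icc s t) := by
    refine monotoneOn_of_deriv_nonneg (convex_Icc s t) (hg.mono hsub) ?_ ?_ <;>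
      rw [interior_Icc]
    · exact hgd.mono (Ioo_subset_Ioo has htb)
    · exact fun u hu => hderiv u (Ioo_subset_Ioo has htb hu) (hneg u (Ioo_subset_Ioc_self hu))
  linarith [hmono (left_mem_Icc.2 hst.le) (right_mem_Icc.2 hst.le) hst.le]

theorem cbf_forward_invariance_general (n : ℕ) (h : EuclideanSpace ℝ (Fin n) → ℝ)
    (hh : ContDiff ℝ 1 h) (α : ℝ → ℝ)
    (hα0 : α 0 = 0) (hmono : Monotone α)
    (T : ℝ) (x : ℝ → EuclideanSpace ℝ (Fin n)) (hx : ContDiff ℝ 1 x)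
    (hineq : ∀ t ∈ Set.Icc 0 T, deriv (fun s => h (x s)) t ≥ -α (h (x t)))
    (h0 : h (x 0) ≥ 0) :
    ∀ t ∈ Set.Icc 0 T, h (x t) ≥ 0 := by
  have hdiff : Differentiable ℝ (fun s => h (x s)) :=
    (hh.differentiable one_ne_zero).comp (hx.differentiable one_ne_zero)
  refine nonneg_of_deriv_nonneg_of_neg hdiff.continuous.continuousOn hdiff.differentiableOn
    (fun u hu hneg => ?_) h0
  have hα_nonpos : α (h (x u)) ≤ 0 := hα0 ▸ hmono hneg.le
  linarith [hineq u (Ioo_subset_Icc_self hu)]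

theorem cbf_forward_invariance (n : ℕ) (h : EuclideanSpace ℝ (Fin n) → ℝ)
    (hh : ContDiff ℝ 1 h) (α : ℝ → ℝ) (hα : LocallyLipschitz α)
    (hα0 : α 0 = 0) (hmono : Monotone α)
    (T : ℝ) (hT : T ≥ 0) (x : ℝ → EuclideanSpace ℝ (Fin n)) (hx : ContDiff ℝ 1 x)
    (hineq : ∀ t ∈ Set.Icc 0 T, deriv (fun s => h (x s)) t ≥ -α (h (x t)))
    (h0 : h (x 0) ≥ 0) :
    ∀ t ∈ Set.Icc 0 T, h (x t) ≥ 0 :=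
  cbf_forward_invariance_general n h hh α hα0 hmono T x hx hineq h0
end

section
/- Let α : ℝ → ℝ be L_α-Lipschitz, h : ℝ^n → ℝ, U : ℝ^p → ℝ with 0 ≤ U(w) ≤ b2‖w‖², and suppose for a point (x, z̃) with h(x) - U(z̃) ≥ 0 we have the bound D ≥ -α(h(x)) + η + (b3/ε - K2)‖z̃‖² - K1‖z̃‖ for some real D (with η, b3, ε > 0, K1, K2, b2, L_α ≥ 0). If ε < min{4ηνb3/(K1² + 4ηK2), (1-ν)b3/(L_α b2)} for some ν ∈ (0,1) (with the conventions K2, K1, L_α b2 > 0; otherwise the corresponding bound is vacuous), then D ≥ -α(h(x) - U(z̃)). -/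
theorem final_assembly (n p : ℕ)
    (α : ℝ → ℝ) (Lα : ℝ) (hLα : Lα ≥ 0)
    (hlip : ∀ s t : ℝ, |α s - α t| ≤ Lα * |s - t|)
    (h : EuclideanSpace ℝ (Fin n) → ℝ) (U : EuclideanSpace ℝ (Fin p) → ℝ)
    (b2 : ℝ) (hb2 : b2 ≥ 0)
    (hU : ∀ w, 0 ≤ U w ∧ U w ≤ b2 * ‖w‖ ^ 2)
    (x : EuclideanSpace ℝ (Fin n)) (ztil : EuclideanSpace ℝ (Fin p))
    (hxz : h x - U ztil ≥ 0)
    (D η b3 ε K1 K2 ν : ℝ)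
    (hη : η > 0) (hb3 : b3 > 0) (hε0 : ε > 0) (hK1 : K1 ≥ 0) (hK2 : K2 ≥ 0)
    (hν : 0 < ν) (hν1 : ν < 1)
    (hD : D ≥ -α (h x) + η + (b3 / ε - K2) * ‖ztil‖ ^ 2 - K1 * ‖ztil‖)
    (hε1 : K1 ^ 2 + 4 * η * K2 = 0 ∨ ε < 4 * η * ν * b3 / (K1 ^ 2 + 4 * η * K2))
    (hε2 : Lα * b2 = 0 ∨ ε < (1 - ν) * b3 / (Lα * b2)) :
    D ≥ -α (h x - U ztil) := by
  obtain ⟨hU1, hU2⟩ := hU ztil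
  set r : ℝ := ‖ztil‖ with hrdef
  have hr : 0 ≤ r := norm_nonneg _
  -- Lipschitz bound
  have hαb : α (h x) - α (h x - U ztil) ≤ Lα * U ztil := by
    have := hlip (h x) (h x - U ztil)
    have h1 : α (h x) - α (h x - U ztil) ≤ |α (h x) - α (h x - U ztil)| := le_abs_self _
    have h2 : |h x - (h x - U ztil)| = U ztil := by
      rw [show h x - (h x - U ztil) = U ztil by ring, abs_of_nonneg hU1]
    linarith [this, h2 ▸ this]
  have hLU : Lα * U ztil ≤ Lα * b2 * r ^ 2 := by nlinarith
  -- fact1 : Lα*b2 ≤ (1-ν)*b3/ε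
  have fact1 : Lα * b2 * ε ≤ (1 - ν) * b3 := by
    rcases hε2 with h0 | hlt
    · rw [h0]; nlinarith
    · rcases eq_or_lt_of_le (mul_nonneg hLα hb2) with h0 | hpos
      · nlinarith
      · rw [lt_div_iff₀ hpos] at hlt; linarith [hlt]
  -- fact2 : K1^2 + 4*η*K2 ≤ 4*η*ν*b3/ε  (as  (K1^2+4ηK2)*ε ≤ 4ηνb3)
  have fact2 : (K1 ^ 2 + 4 * η * K2) * ε ≤ 4 * η * ν * b3 := by
    rcases hε1 with h0 | hlt
    · rw [h0, zero_mul]; positivity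
    · have hpos : 0 < K1 ^ 2 + 4 * η * K2 := by
        rcases eq_or_lt_of_le (by positivity : (0:ℝ) ≤ K1 ^ 2 + 4 * η * K2) with h0' | h
        · exfalso
          rw [← h0', div_zero] at hlt; linarith
        · exact h
      rw [lt_div_iff₀ hpos] at hlt; nlinarith
  -- convert facts back to /ε form
  have hε0' : (0:ℝ) < ε := hε0
  have f1 : Lα * b2 ≤ (1 - ν) * b3 / ε := by
    rw [le_div_iff₀ hε0']; linarith
  have f2 : K1 ^ 2 + 4 * η * K2 ≤ 4 * η * (ν * b3 / ε) := by
    rw [div_eq_mul_inv]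
    have : 4 * η * (ν * b3 * ε⁻¹) = (4 * η * ν * b3) * ε⁻¹ := by ring
    rw [this, ← div_eq_mul_inv, le_div_iff₀ hε0']; linarith
  have hsplit : b3 / ε = ν * b3 / ε + (1 - ν) * b3 / ε := by ring
  -- quadratic nonnegativity: η - K1 r + (ν b3/ε - K2) r² ≥ 0
  have hquad : 0 ≤ η - K1 * r + (ν * b3 / ε - K2) * r ^ 2 := by
    nlinarith [sq_nonneg (2 * η - K1 * r), sq_nonneg r, mul_nonneg (sq_nonneg r) hη.le]
  nlinarith [mul_nonneg (sub_nonneg.mpr f1) (sq_nonneg r)]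
end
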